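/- Suppose for each pair of vertices (u,v) and each hop bound i, P^{(i)}(u,v) denotes the i-hop-limited shortest u–v path computed by Bellman–Ford with a fixed consistent tie-breaking (prefer smaller weight, then fewer hops, then lexicographically smaller vertex sequence from tail to head). If two paths P^{(i)}(u,v) and P^{(i')}(u',v') both traverse vertices x and y in the same order, with the same number ℓ of hops between x and y in each, then the subpaths between x and y in the two paths are identical. -/

import Mathlib

open scoped ENNReal

namespace Stmt3

variable {V : Type*}

/-- Endpoint of a walk starting at `u` with subsequent vertices given by the list. -/
def last : V → List V → V
  | u, [] => u
  | _, x :: xs => last x xs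

/-- Weight of a walk starting at `u` with subsequent vertices given by the list. -/
noncomputable def cost (w : V → V → ℝ≥0∞) : V → List V → ℝ≥0∞
  | _, [] => 0
  | u, x :: xs => w u x + cost w x xs

/-- `h`-hop-limited distance from `u` to `v` (non-edges have weight `⊤`). -/
noncomputable def hdist (w : V → V → ℝ≥0∞) (h : ℕ) (u v : V) : ℝ≥0∞ :=
  ⨅ p ∈ {p : List V | p.length ≤ h ∧ last u p = v}, cost w u p

/-- Shortest-path distance from `u` to `v`. -/
noncomputable def dist (w : V → V → ℝ≥0∞) (u v : V) : ℝ≥0∞ :=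
  ⨅ h : ℕ, hdist w h u v

/-- `S` is a set of (at most) `k` closest reachable vertices to `v` (excluding `v`),
with ties broken arbitrarily: members of `S` are reachable and distinct from `v`,
`|S| ≤ k`, every member is at least as close as every reachable non-member, and `S`
has exactly `k` elements unless it already contains all reachable vertices. -/
def IsKClosest [Fintype V] (w : V → V → ℝ≥0∞) (k : ℕ) (v : V) (S : Finset V) : Prop :=
  (∀ u ∈ S, u ≠ v ∧ dist w v u < ⊤) ∧ S.card ≤ k ∧
  (∀ y ∈ S, ∀ z, z ∉ S → z ≠ v → dist w v z < ⊤ → dist w v y ≤ dist w v z) ∧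
  (∀ z, z ∉ S → z ≠ v → dist w v z < ⊤ → S.card = k)

/-- Weight function of the union `G ∪ G^(k)` of the graph with the `k`-shortcut hopset:
hopset edges `(u,v)` (present when `u ∈ S v` or `v ∈ S u`) get weight `d_G(u,v)`. -/
noncomputable def unionW [Fintype V] [DecidableEq V] (w : V → V → ℝ≥0∞) (S : V → Finset V)
    (u v : V) : ℝ≥0∞ :=
  if u ∈ S v ∨ v ∈ S u then min (w u v) (dist w u v) else w u v


/-- `p` is the canonical `i`-hop-limited shortest `u`–`v` path: it has at most `i`
edges, ends at `v`, has minimum weight (equal to the `i`-limited distance), and among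
such paths it has the fewest edges and is lexicographically smallest with respect to
the vertex identifiers `ids` (comparing vertex sequences from the tail `u`). -/
def CanonicalPath (w : V → V → ℝ≥0∞) (ids : V → ℕ) (i : ℕ) (u v : V) (p : List V) : Prop :=
  p.length ≤ i ∧ last u p = v ∧ cost w u p = hdist w i u v ∧
  ∀ q : List V, q.length ≤ i → last u q = v → cost w u q = hdist w i u v →
    p.length ≤ q.length ∧
    (p.length = q.length → ¬ List.Lex (· < ·) ((u :: q).map ids) ((u :: p).map ids))

/-!
A segment `s` of a canonical path from `x` to `y` is optimal, for the same order, among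
`x`–`y` walks with at most as many hops: splicing in a lighter, shorter, or equally good but
lexicographically smaller walk in place of `s` would improve the whole path, since between
equal-length segments inside a common prefix and suffix the lexicographic comparison is
decided within the segments. Two such segments with equal hop count are thus each not
lexicographically smaller than the other, hence equal, `ids` being injective. The weight
comparison needs finite weights; a canonical path of infinite weight has at most one hop,
where the claim is trivial.
-/

theorem _root_.List.Lex.append_of_length_eq {α : Type*} {r : α → α → Prop} :
    ∀ {t s : List α}, List.Lex r t s → t.length = s.length →
      ∀ B B' : List α, List.Lex r (t ++ B) (s ++ B')
  | _, _, .nil, hlen, _, _ => by simp at hlen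
  | _, _, .rel h, _, _, _ => .rel h
  | _, _, .cons h, hlen, B, B' => .cons (h.append_of_length_eq (by simpa using hlen) B B')

@[simp]
lemma last_append (u : V) (l₁ l₂ : List V) : last u (l₁ ++ l₂) = last (last u l₁) l₂ := by
  induction l₁ generalizing u with
  | nil => rfl
  | cons a l ih => exact ih a

@[simp]
lemma cost_append (w : V → V → ℝ≥0∞) (u : V) (l₁ l₂ : List V) :
    cost w u (l₁ ++ l₂) = cost w u l₁ + cost w (last u l₁) l₂ := by
  induction l₁ generalizing u with
  | nil => simp [cost, last]
  | cons a l ih => simp [cost, last, ih, add_assoc]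

lemma last_take (u : V) (p : List V) {a : ℕ} (h : a ≤ p.length) :
    last u (p.take a) = (u :: p).getD a u := by
  induction p generalizing u a with
  | nil =>
    obtain rfl : a = 0 := by simpa using h
    rfl
  | cons c p ih =>
    cases a with
    | zero => rfl
    | succ a =>
      have ha : a < (c :: p).length := by simp at h ⊢; omega
      rw [List.take_succ_cons, last, ih c (by simpa using h), List.getD_cons_succ,
        List.getD_eq_getElem _ _ ha, List.getD_eq_getElem _ _ ha]

lemma eq_of_last_eq_of_length_le_one {x : V} {s t : List V} (hlen : s.length = t.length)
    (h1 : s.length ≤ 1) (hlast : last x s = last x t) : s = t := by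
  match s, t with
  | [], [] => rfl
  | [_], [_] => simpa [last] using hlast
  | _ :: _ :: _, _ => simp at h1
  | [], _ :: _ | [_], [] | [_], _ :: _ :: _ => simp at hlen

lemma exists_split_of_le {u : V} {p : List V} {a b : ℕ} (hab : a ≤ b) (hb : b ≤ p.length) :
    ∃ A s B, p = A ++ s ++ B ∧ s.length = b - a ∧ last u A = (u :: p).getD a u ∧
      last (last u A) s = (u :: p).getD b u ∧
      ((u :: p).drop a).take (b - a + 1) = last u A :: s := by
  have hsplit : p.take b = p.take a ++ (p.drop a).take (b - a) := by
    rw [← List.take_add, Nat.add_sub_cancel' hab]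
  have ha : a < (u :: p).length := by simp; omega
  refine ⟨p.take a, (p.drop a).take (b - a), p.drop b, ?_, ?_, last_take u p (by omega), ?_, ?_⟩
  · rw [← hsplit, List.take_append_drop]
  · simp; omega
  · rw [← last_append, ← hsplit, last_take u p hb]
  · rw [last_take u p (by omega), List.getD_eq_getElem _ _ ha, List.drop_eq_getElem_cons ha,
      List.drop_succ_cons, List.take_succ_cons]

section CanonicalPath

variable {w : V → V → ℝ≥0∞} {ids : V → ℕ} {i : ℕ} {u v : V}

lemma hdist_le_cost {p : List V} (hlen : p.length ≤ i) (hlast : last u p = v) :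
    hdist w i u v ≤ cost w u p :=
  iInf₂_le p ⟨hlen, hlast⟩

/-- Every walk of at most `i` hops to `v` is then optimal, so `p` is no longer than `[]` or
`[v]`. -/
lemma CanonicalPath.length_le_one_of_cost_eq_top {p : List V}
    (hp : CanonicalPath w ids i u v p) (htop : cost w u p = ⊤) : p.length ≤ 1 := by
  obtain ⟨hi, hv, hopt, hmin⟩ := hp
  have hmin' : ∀ q : List V, q.length ≤ i → last u q = v → p.length ≤ q.length :=
    fun q hq hqv => (hmin q hq hqv (le_antisymm (by rw [← hopt, htop]; exact le_top)
      (hdist_le_cost hq hqv))).1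
  rcases Nat.eq_zero_or_pos i with rfl | hi0
  · omega
  by_cases huv : u = v
  · exact (hmin' [] (Nat.zero_le _) huv).trans (Nat.zero_le _)
  · exact hmin' [v] hi0 rfl

lemma CanonicalPath.splice {A s t B : List V} {x : V}
    (hp : CanonicalPath w ids i u v (A ++ s ++ B)) (hx : last u A = x)
    (hlen : t.length ≤ s.length) (hlast : last x t = last x s)
    (hcost : cost w x t ≤ cost w x s) :
    t.length = s.length ∧ ¬ List.Lex (· < ·) (t.map ids) (s.map ids) := by
  subst hx
  obtain ⟨hi, hv, hopt, hmin⟩ := hp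
  have hlen' : (A ++ t ++ B).length ≤ i := by simp at hi ⊢; omega
  have hlast' : last u (A ++ t ++ B) = v := by simpa [hlast] using hv
  have hcost' : cost w u (A ++ t ++ B) ≤ cost w u (A ++ s ++ B) := by
    simp only [cost_append, last_append, hlast]
    gcongr
  obtain ⟨hshort, hlex⟩ :=
    hmin _ hlen' hlast' (le_antisymm (hcost'.trans hopt.le) (hdist_le_cost hlen' hlast'))
  have hts : t.length = s.length := by simp at hshort; omega
  refine ⟨hts, fun hlt => hlex (by simp [hts]) ?_⟩
  simpa using (hlt.append_of_length_eq (by simpa using hts) (B.map ids) (B.map ids)).append_left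
    _ ((u :: A).map ids)

lemma CanonicalPath.cost_segment_le {A s t B : List V} {x : V}
    (hp : CanonicalPath w ids i u v (A ++ s ++ B)) (hx : last u A = x)
    (hfin : cost w u (A ++ s ++ B) ≠ ⊤) (hlen : t.length ≤ s.length)
    (hlast : last x t = last x s) : cost w x s ≤ cost w x t := by
  subst hx
  obtain ⟨hi, hv, hopt, -⟩ := hp
  have hlen' : (A ++ t ++ B).length ≤ i := by simp at hi ⊢; omega
  have hlast' : last u (A ++ t ++ B) = v := by simpa [hlast] using hv
  have hle := hdist_le_cost (w := w) hlen' hlast'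
  rw [← hopt] at hle
  simp only [cost_append, last_append, hlast] at hle hfin
  obtain ⟨⟨hA, -⟩, hB⟩ := ENNReal.add_ne_top.mp hfin |>.imp_left ENNReal.add_ne_top.mp
  exact (ENNReal.add_le_add_iff_left hA).mp ((ENNReal.add_le_add_iff_right hB).mp hle)

lemma CanonicalPath.segment_eq (hids : Function.Injective ids) {i' : ℕ} {u' v' x : V}
    {A s B A' s' B' : List V} (hp : CanonicalPath w ids i u v (A ++ s ++ B))
    (hq : CanonicalPath w ids i' u' v' (A' ++ s' ++ B')) (hx : last u A = x)
    (hx' : last u' A' = x) (hlast : last x s' = last x s) (hlen : s'.length = s.length) :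
    s = s' := by
  by_cases htop : cost w u (A ++ s ++ B) = ⊤ ∨ cost w u' (A' ++ s' ++ B') = ⊤
  · refine eq_of_last_eq_of_length_le_one hlen.symm ?_ hlast.symm
    rcases htop with htop | htop
    · simpa using (hp.length_le_one_of_cost_eq_top htop).trans' (by simp; omega)
    · simpa [← hlen] using (hq.length_le_one_of_cost_eq_top htop).trans' (by simp; omega)
  push Not at htop
  obtain ⟨-, hlt⟩ :=
    hp.splice hx hlen.le hlast (hq.cost_segment_le hx' htop.2 hlen.ge hlast.symm)
  obtain ⟨-, hgt⟩ :=
    hq.splice hx' hlen.ge hlast.symm (hp.cost_segment_le hx htop.1 hlen.le hlast)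
  exact List.map_injective_iff.mpr hids (Std.Trichotomous.trichotomous _ _ hgt hlt)

end CanonicalPath

theorem canonical_subpaths_eq_general
    (w : V → V → ℝ≥0∞)
    (ids : V → ℕ) (hids : Function.Injective ids)
    (i i' : ℕ) (u v u' v' : V) (p q : List V)
    (hp : CanonicalPath w ids i u v p) (hq : CanonicalPath w ids i' u' v' q)
    (x y : V) (a b a' b' ℓ : ℕ)
    (hab : a ≤ b) (hb : b ≤ p.length) (ha'b' : a' ≤ b') (hb' : b' ≤ q.length)
    (hxa : (u :: p).getD a u = x) (hyb : (u :: p).getD b u = y)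
    (hxa' : (u' :: q).getD a' u' = x) (hyb' : (u' :: q).getD b' u' = y)
    (hl : b - a = ℓ) (hl' : b' - a' = ℓ) :
    ((u :: p).drop a).take (ℓ + 1) = ((u' :: q).drop a').take (ℓ + 1) := by
  obtain ⟨A, s, B, rfl, hs, hA, hAs, hseg⟩ := exists_split_of_le (u := u) hab hb
  obtain ⟨A', s', B', rfl, hs', hA', hAs', hseg'⟩ := exists_split_of_le (u := u') ha'b' hb'
  subst hl
  have hy : last x s = y := by rw [← hxa, ← hA, hAs, hyb]
  have hy' : last x s' = y := by rw [← hxa', ← hA', hAs', hyb']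
  rw [hseg, ← hl', hseg', hA, hA', hxa, hxa',
    hp.segment_eq hids hq (hA.trans hxa) (hA'.trans hxa') (hy'.trans hy.symm) (by omega)]

/-- Nesting property of canonical hop-limited shortest paths: if two canonical paths
both traverse `x` and then `y` (in this order), with the same number `ℓ` of hops
between `x` and `y`, then their subpaths between `x` and `y` are identical. -/
theorem canonical_subpaths_eq
    (w : V → V → ℝ≥0∞) (hsymm : ∀ u v, w u v = w v u)
    (ids : V → ℕ) (hids : Function.Injective ids)
    (i i' : ℕ) (u v u' v' : V) (p q : List V)
    (hp : CanonicalPath w ids i u v p) (hq : CanonicalPath w ids i' u' v' q)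
    (x y : V) (a b a' b' ℓ : ℕ)
    (hab : a ≤ b) (hb : b ≤ p.length) (ha'b' : a' ≤ b') (hb' : b' ≤ q.length)
    (hxa : (u :: p).getD a u = x) (hyb : (u :: p).getD b u = y)
    (hxa' : (u' :: q).getD a' u' = x) (hyb' : (u' :: q).getD b' u' = y)
    (hl : b - a = ℓ) (hl' : b' - a' = ℓ) :
    ((u :: p).drop a).take (ℓ + 1) = ((u' :: q).drop a').take (ℓ + 1) :=
  canonical_subpaths_eq_general w ids hids i i' u v u' v' p q hp hq x y a b a' b' ℓ hab hb ha'b' hb'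
    hxa hyb hxa' hyb' hl hl'

end Stmt3
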